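/- The set R := Δ ∪ {(g·w^{+∞}, g·w^{-∞}) : g ∈ F_d, w ∈ F_d \ {e}} is dense in the product space ∂F_d × ∂F_d. -/

import Mathlib

/-- The alphabet of the free group on `d` generators: a generator together with
a sign (`true` = the generator itself, `false` = its inverse). -/
abbrev Letter (d : ℕ) := Fin d × Bool

/-- The inverse of a letter. -/
def Letter.inv {d : ℕ} (a : Letter d) : Letter d := (a.1, !a.2)

/-- A sequence of letters is reduced if no letter is followed by its inverse. -/
def IsReducedSeq {d : ℕ} (x : ℕ → Letter d) : Prop :=
  ∀ n, x (n + 1) ≠ Letter.inv (x n)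

/-- The boundary `∂F_d` of the free group on `d` generators: the space of
infinite reduced words, topologized as a subspace of the product space
`(Fin d × Bool)^ℕ` (each factor discrete). -/
abbrev Boundary (d : ℕ) := {x : ℕ → Letter d // IsReducedSeq x}

/-- The number of letters cancelled at the junction when the (finite reduced)
word `u` is concatenated with the infinite reduced word `x`. -/
def cancelLen {d : ℕ} (u : List (Letter d)) (x : ℕ → Letter d) : ℕ :=
  Nat.findGreatest (fun k => ∀ i < k, u[u.length - 1 - i]? = some (Letter.inv (x i))) u.length

/-- The reduction of the concatenation of a finite reduced word `u` with an
infinite reduced word `x`. -/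
def concatReduce {d : ℕ} (u : List (Letter d)) (x : ℕ → Letter d) : ℕ → Letter d :=
  fun n =>
    let k := cancelLen u x
    let m := u.length - k
    if h : n < m then u[n]'(by omega) else x (k + (n - m))

open Classical in
/-- The boundary action of the free group on its boundary: left multiplication
followed by free reduction.  (The `if` always takes the `then` branch, since the
reduction of the concatenation of reduced words is again reduced; hence this is
exactly the usual boundary action `g · x`.) -/
noncomputable def boundaryAct {d : ℕ} (g : FreeGroup (Fin d)) (x : Boundary d) : Boundary d :=
  if h : IsReducedSeq (concatReduce (FreeGroup.toWord g) x.1) then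
    ⟨concatReduce (FreeGroup.toWord g) x.1, h⟩
  else x

/-- `x` is the boundary point `w^{+∞}`, the limit of the sequence `(wⁿ)ₙ₌₁^∞`:
for every `k` there is `N` such that for all `n ≥ N` the reduced word of `wⁿ`
has length at least `k` and its first `k` letters agree with those of `x`.
The point `w^{-∞}` is `(w⁻¹)^{+∞}`, i.e. `IsPlusLimit w⁻¹`. -/
def IsPlusLimit {d : ℕ} (w : FreeGroup (Fin d)) (x : Boundary d) : Prop :=
  ∀ k : ℕ, ∃ N : ℕ, ∀ n ≥ N,
    k ≤ (FreeGroup.toWord (w ^ n)).length ∧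
    ∀ i < k, (FreeGroup.toWord (w ^ n))[i]? = some (x.1 i)

/-- The relation `R_W = Δ ∪ {(g·w^{+∞}, g·w^{-∞}) : g ∈ F_d, w ∈ W ∪ W⁻¹}`
on the boundary `∂F_d`. -/
def RW {d : ℕ} (W : Set (FreeGroup (Fin d))) : Set (Boundary d × Boundary d) :=
  {p | p.1 = p.2} ∪
  {p | ∃ (g w : FreeGroup (Fin d)) (xp xm : Boundary d),
      (w ∈ W ∨ w⁻¹ ∈ W) ∧ IsPlusLimit w xp ∧ IsPlusLimit w⁻¹ xm ∧
      p.1 = boundaryAct g xp ∧ p.2 = boundaryAct g xm}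

open Classical in
/-- `p[w]` : the (`ℤ`-valued) indicator function of the cylinder set of the
reduced word of `w` in the boundary. -/
noncomputable def pFun {d : ℕ} (w : FreeGroup (Fin d)) : Boundary d → ℤ :=
  fun x =>
    if ∀ i < (FreeGroup.toWord w).length, (FreeGroup.toWord w)[i]? = some (x.1 i) then 1 else 0

/-- `q[s] = p[s] + p[s⁻¹]` for a generator `s`. -/
noncomputable def qFun {d : ℕ} (s : Fin d) : Boundary d → ℤ :=
  fun x => pFun (FreeGroup.of s) x + pFun (FreeGroup.of s)⁻¹ x

/-- `q[sⁿ] = p[sⁿ] + p[s⁻ⁿ]` for a generator `s`. -/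
noncomputable def qPow {d : ℕ} (s : Fin d) (n : ℕ) : Boundary d → ℤ :=
  fun x => pFun (FreeGroup.of s ^ n) x + pFun ((FreeGroup.of s ^ n)⁻¹) x

/-- The map `w ↦ ŵ` flipping the sign of the exponent of the last syllable of
the reduced word of `w`: if `w = s_{i(1)}^{n(1)} ⋯ s_{i(k)}^{n(k)}` then
`ŵ = s_{i(1)}^{n(1)} ⋯ s_{i(k-1)}^{n(k-1)} s_{i(k)}^{-n(k)}`.  (The final
syllable is the maximal terminal run of equal letters of the reduced word.) -/
def hatWord {d : ℕ} (w : FreeGroup (Fin d)) : FreeGroup (Fin d) :=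
  match (FreeGroup.toWord w).reverse with
  | [] => w
  | a :: _ =>
    let k := ((FreeGroup.toWord w).reverse.takeWhile (fun b => b == a)).length
    FreeGroup.mk ((FreeGroup.toWord w).take ((FreeGroup.toWord w).length - k) ++
      List.replicate k (Letter.inv a))


/-!
If the first `k` letters of `x` and `y` agree, the diagonal point `(x, x)` is `k`-close to
`(x, y)`. Otherwise these prefixes are `P a X` and `P b Y` with letters `a ≠ b`. Since `d ≥ 2`,
they extend to reduced words `P U`, `P V` with `U = a X c`, `V = b Y e` and `c ≠ e`. Then
`w = U V⁻¹` is cyclically reduced, so `w^{+∞} = U V⁻¹ U V⁻¹ ⋯` begins with `U` and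
`w^{-∞} = V U⁻¹ V U⁻¹ ⋯` begins with `V`; translating by `g = P` causes no cancellation, so
`(g·w^{+∞}, g·w^{-∞})` begins with the two prescribed prefixes.
-/

open FreeGroup Topology

lemma Stream'.take_eq_take_iff {α : Type*} {s t : Stream' α} {k : ℕ} :
    s.take k = t.take k ↔ ∀ i < k, s.get i = t.get i := by
  simp [List.ext_getElem_iff]

lemma Stream'.take_eq_take_of_le {α : Type*} {s t : Stream' α} {m n : ℕ}
    (h : s.take n = t.take n) (hmn : m ≤ n) : s.take m = t.take m :=
  Stream'.take_eq_take_iff.2 fun i hi => Stream'.take_eq_take_iff.1 h i (by omega)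

lemma Stream'.take_cycle_mul_length {α : Type*} {L : List α} (hL : L ≠ []) (n : ℕ) :
    (Stream'.cycle L hL).take (n * L.length) = (List.replicate n L).flatten := by
  induction n with
  | zero => simp
  | succ n ih =>
    rw [Nat.succ_mul, Nat.add_comm, Stream'.cycle_eq, ← Stream'.append_take, ih,
      List.replicate_succ, List.flatten_cons]

lemma List.exists_eq_append_cons_of_ne {α : Type*} :
    ∀ {l₁ l₂ : List α}, l₁.length = l₂.length → l₁ ≠ l₂ →
      ∃ p a b t₁ t₂, a ≠ b ∧ l₁ = p ++ a :: t₁ ∧ l₂ = p ++ b :: t₂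
  | [], [], _, h => absurd rfl h
  | a :: t₁, b :: t₂, hlen, hne => by
    by_cases hab : a = b
    · subst hab
      obtain ⟨p, a', b', s₁, s₂, hab', rfl, rfl⟩ :=
        exists_eq_append_cons_of_ne (by simpa using hlen) (by simpa using hne)
      exact ⟨a :: p, a', b', s₁, s₂, hab', rfl, rfl⟩
    · exact ⟨[], a, b, t₁, t₂, hab, rfl, rfl⟩

lemma PiNat.hasBasis_nhds_cylinder {E : ℕ → Type*} [∀ n, TopologicalSpace (E n)]
    [∀ n, DiscreteTopology (E n)] (x : ∀ n, E n) :
    (𝓝 x).HasBasis (fun _ => True) (PiNat.cylinder x) := by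
  refine ⟨fun t => ⟨fun ht => ?_, fun ⟨n, _, hn⟩ => Filter.mem_of_superset
    ((PiNat.isOpen_cylinder E x n).mem_nhds (PiNat.self_mem_cylinder x n)) hn⟩⟩
  obtain ⟨_, ⟨y, n, rfl⟩, hx, ht⟩ := (PiNat.isTopologicalBasis_cylinders E).mem_nhds_iff.1 ht
  exact ⟨n, trivial, PiNat.mem_cylinder_iff_eq.1 hx ▸ ht⟩

namespace Letter

variable {d : ℕ}

@[simp]
lemma inv_inv (a : Letter d) : Letter.inv (Letter.inv a) = a := by
  simp [Letter.inv]

lemma inv_ne_inv_iff {a b : Letter d} : Letter.inv b ≠ Letter.inv a ↔ b ≠ a :=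
  (Function.LeftInverse.injective inv_inv).ne_iff

-- The right-hand side is the adjacency relation of `FreeGroup.IsReduced`.
lemma ne_inv_iff {a b : Letter d} : b ≠ Letter.inv a ↔ (a.1 = b.1 → a.2 = b.2) := by
  obtain ⟨a₁, a₂⟩ := a
  obtain ⟨b₁, b₂⟩ := b
  cases a₂ <;> cases b₂ <;> simp [Letter.inv, eq_comm]

lemma exists_ne_ne (hd : 2 ≤ d) (u v : Letter d) : ∃ c : Letter d, c ≠ u ∧ c ≠ v := by
  have hcard : ({u, v} : Finset (Letter d)).card < (Finset.univ : Finset (Letter d)).card := by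
    rw [Finset.card_univ, Fintype.card_prod, Fintype.card_fin, Fintype.card_bool]
    exact Finset.card_le_two.trans_lt (by omega)
  obtain ⟨c, -, hc⟩ := Finset.exists_mem_notMem_of_card_lt_card hcard
  simp only [Finset.mem_insert, Finset.mem_singleton, not_or] at hc
  exact ⟨c, hc⟩

end Letter

section Words

variable {d : ℕ} {L U V : List (Letter d)}

lemma isReduced_invRev (h : IsReduced L) : IsReduced (invRev L) :=
  isReduced_iff_reduce_eq.2 (by rw [reduce_invRev, h.reduce_eq])

lemma head?_invRev : (invRev L).head? = L.getLast?.map Letter.inv := by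
  simp [invRev, List.head?_reverse, List.getLast?_map]
  rfl

lemma getLast?_invRev : (invRev L).getLast? = L.head?.map Letter.inv := by
  simp [invRev, List.getLast?_reverse, List.head?_map]
  rfl

lemma exists_isReduced_append_singleton (hd : 2 ≤ d) (hL : IsReduced L) (v : Letter d) :
    ∃ c, c ≠ v ∧ IsReduced (L ++ [c]) := by
  cases L using List.reverseRecOn with
  | nil =>
    obtain ⟨c, hc, -⟩ := Letter.exists_ne_ne hd v v
    exact ⟨c, hc, .singleton⟩
  | append_singleton L a =>
    obtain ⟨c, hca, hcv⟩ := Letter.exists_ne_ne hd (Letter.inv a) v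
    refine ⟨c, hcv, ?_⟩
    rw [FreeGroup.IsReduced, List.isChain_append]
    refine ⟨hL, List.isChain_singleton c, ?_⟩
    simpa using Letter.ne_inv_iff.1 hca

lemma isCyclicallyReduced_append_invRev (hU : IsReduced U) (hV : IsReduced V)
    (hU₀ : U ≠ []) (hV₀ : V ≠ []) (hhead : U.head? ≠ V.head?)
    (hlast : U.getLast? ≠ V.getLast?) : IsCyclicallyReduced (U ++ invRev V) := by
  rw [isCyclicallyReduced_iff, FreeGroup.IsReduced, List.isChain_append,
    List.getLast?_append_of_ne_nil _ (by simpa [invRev] using hV₀),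
    List.head?_append_of_ne_nil _ hU₀, getLast?_invRev, head?_invRev]
  refine ⟨⟨hU, isReduced_invRev hV, ?_⟩, ?_⟩
  · intro a ha _ hb
    obtain ⟨b, hVb, rfl⟩ := Option.map_eq_some_iff.1 hb
    exact Letter.ne_inv_iff.1 (Letter.inv_ne_inv_iff.2 fun h => hlast (by rw [ha, hVb, h]))
  · intro _ hb a ha
    obtain ⟨b, hVb, rfl⟩ := Option.map_eq_some_iff.1 hb
    refine Letter.ne_inv_iff.1 fun h => hhead ?_
    rw [ha, hVb, h, Letter.inv_inv]

lemma toWord_mk_pow (h : IsCyclicallyReduced L) (n : ℕ) :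
    (FreeGroup.mk L ^ n).toWord = (List.replicate n L).flatten := by
  rw [pow_mk, toWord_mk, (h.flatten_replicate n).isReduced.reduce_eq]

end Words

-- `Boundary d` stores functions `ℕ → Letter d`; giving them the type `Stream'` lets the
-- `Stream'` API rewrite without unfolding `Stream'`.
def Boundary.toStream {d : ℕ} (x : Boundary d) : Stream' (Letter d) := x.1

section Sequences

variable {d : ℕ} {L P Q : List (Letter d)}

lemma isReducedSeq_iff_forall_isReduced_take {s : Stream' (Letter d)} :
    IsReducedSeq s ↔ ∀ n, IsReduced (s.take n) := by
  simp only [IsReducedSeq, FreeGroup.IsReduced, List.isChain_iff_getElem, Stream'.length_take,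
    Stream'.take_get]
  refine ⟨fun h n i _ => Letter.ne_inv_iff.1 (h i), fun h i => ?_⟩
  exact Letter.ne_inv_iff.2 (h (i + 2) i (by omega))

lemma isReducedSeq_cycle (hL : L ≠ []) (h : IsCyclicallyReduced L) :
    IsReducedSeq (Stream'.cycle L hL) := by
  refine isReducedSeq_iff_forall_isReduced_take.2 fun n => ?_
  have hn : n ≤ n * L.length := Nat.le_mul_of_pos_right n (List.length_pos_iff.2 hL)
  have hred := (h.flatten_replicate n).isReduced
  rw [← Stream'.take_cycle_mul_length hL] at hred
  exact hred.infix (Stream'.take_prefix_take_left _ _ _ hn).isInfix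

lemma isReducedSeq_append_stream {s : Stream' (Letter d)} (hs : IsReducedSeq s)
    (h : IsReduced (P ++ s.take 1)) : IsReducedSeq (P ++ₛ s) := by
  rw [isReducedSeq_iff_forall_isReduced_take] at hs ⊢
  intro n
  have hPs : IsReduced (P ++ s.take (1 + n)) := by
    rw [Stream'.take_add, ← List.append_assoc]
    exact h.append_overlap (by rw [← Stream'.take_add]; exact hs _)
      (List.ne_nil_of_length_pos (by simp))
  rw [Stream'.append_take] at hPs
  exact hPs.infix (Stream'.take_prefix_take_left _ _ _ (by omega)).isInfix

lemma cancelLen_eq_zero {s : Stream' (Letter d)} (h : IsReduced (P ++ s.take 1)) :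
    cancelLen P s = 0 := by
  refine Nat.findGreatest_eq_zero_iff.2 fun k hk _ hcancel => ?_
  have hlast : P.getLast? = some (Letter.inv (s 0)) := by
    simpa [List.getLast?_eq_getElem?] using hcancel 0 hk
  rw [FreeGroup.IsReduced, List.isChain_append] at h
  exact Letter.ne_inv_iff.2 (h.2.2 _ hlast (s 0) rfl) (Letter.inv_inv _).symm

lemma concatReduce_eq_append_stream {s : Stream' (Letter d)} (h : cancelLen P s = 0) :
    concatReduce P s = P ++ₛ s := by
  funext n
  simp only [concatReduce, h, Nat.sub_zero, Nat.zero_add]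
  split_ifs with hn
  · exact (Stream'.get_append_left n P s hn).symm
  · obtain ⟨m, rfl⟩ := Nat.exists_eq_add_of_le (not_lt.1 hn)
    rw [Nat.add_sub_cancel_left]
    exact (Stream'.get_append_right m P s).symm

lemma toStream_boundaryAct_mk {x : Boundary d} (h : IsReduced (P ++ x.toStream.take 1)) :
    (boundaryAct (FreeGroup.mk P) x).toStream = P ++ₛ x.toStream := by
  have hP : (FreeGroup.mk P).toWord = P := by
    rw [toWord_mk, (h.infix (List.prefix_append _ _).isInfix).reduce_eq]
  have hconcat : concatReduce P x.1 = P ++ₛ x.toStream :=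
    concatReduce_eq_append_stream (cancelLen_eq_zero h)
  unfold boundaryAct
  rw [dif_pos (by rw [hP, hconcat]; exact isReducedSeq_append_stream x.2 h)]
  show concatReduce (FreeGroup.mk P).toWord x.1 = _
  rw [hP, hconcat]

lemma take_toStream_boundaryAct_mk {x : Boundary d} (hQ : x.toStream.take Q.length = Q)
    (hQ₀ : Q ≠ []) (hPQ : IsReduced (P ++ Q)) :
    (boundaryAct (FreeGroup.mk P) x).toStream.take (P ++ Q).length = P ++ Q := by
  have h₁ : x.toStream.take 1 = Q.take 1 := by
    rw [← hQ, Stream'.take_take, Nat.min_eq_right (List.length_pos_iff.2 hQ₀)]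
  have hjunction : IsReduced (P ++ x.toStream.take 1) := by
    rw [h₁]
    exact hPQ.infix (List.prefix_append_right_inj P |>.2 (List.take_prefix 1 Q)).isInfix
  rw [toStream_boundaryAct_mk hjunction, List.length_append, ← Stream'.append_take, hQ]

def cyclePoint (L : List (Letter d)) (hL : L ≠ []) (h : IsCyclicallyReduced L) : Boundary d :=
  ⟨Stream'.cycle L hL, isReducedSeq_cycle hL h⟩

lemma take_toStream_cyclePoint (hL : L ≠ []) (h : IsCyclicallyReduced L) {n : ℕ}
    (hn : n ≤ L.length) : (cyclePoint L hL h).toStream.take n = L.take n := by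
  show (Stream'.cycle L hL).take n = L.take n
  rw [Stream'.cycle_eq, Stream'.take_append_of_le_length (h := hn)]

lemma isPlusLimit_mk_cyclePoint (hL : L ≠ []) (h : IsCyclicallyReduced L) :
    IsPlusLimit (FreeGroup.mk L) (cyclePoint L hL h) := by
  intro k
  refine ⟨k, fun n hn => ?_⟩
  have hk : k ≤ n * L.length := hn.trans (Nat.le_mul_of_pos_right n (List.length_pos_iff.2 hL))
  rw [toWord_mk_pow h, ← Stream'.take_cycle_mul_length hL]
  exact ⟨by simpa using hk, fun i hi => Stream'.getElem?_take (by omega)⟩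

end Sequences

section Density

variable {d : ℕ}

lemma exists_mem_RW_take_eq_of_append_cons (hd : 2 ≤ d) {P X Y : List (Letter d)}
    {a b : Letter d} (hab : a ≠ b) (hX : IsReduced (P ++ a :: X))
    (hY : IsReduced (P ++ b :: Y)) :
    ∃ p ∈ RW {w : FreeGroup (Fin d) | w ≠ 1},
      p.1.toStream.take (P ++ a :: X).length = P ++ a :: X ∧
      p.2.toStream.take (P ++ b :: Y).length = P ++ b :: Y := by
  obtain ⟨c, -, hc⟩ :=
    exists_isReduced_append_singleton hd (hX.infix (List.suffix_append _ _).isInfix) a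
  obtain ⟨e, hec, he⟩ :=
    exists_isReduced_append_singleton hd (hY.infix (List.suffix_append _ _).isInfix) c
  set U := a :: X ++ [c]
  set V := b :: Y ++ [e]
  have hUV : IsCyclicallyReduced (U ++ invRev V) :=
    isCyclicallyReduced_append_invRev hc he (by simp [U]) (by simp [V]) (by simpa [U, V])
      (by simpa [U, V, List.getLast?_cons] using hec.symm)
  have hVU : IsCyclicallyReduced (V ++ invRev U) :=
    isCyclicallyReduced_append_invRev he hc (by simp [V]) (by simp [U])
      (by simpa [U, V] using hab.symm) (by simpa [U, V, List.getLast?_cons] using hec)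
  have hUV₀ : U ++ invRev V ≠ [] := by simp [U]
  have hVU₀ : V ++ invRev U ≠ [] := by simp [V]
  have hinv : (FreeGroup.mk (U ++ invRev V))⁻¹ = FreeGroup.mk (V ++ invRev U) := by
    rw [inv_mk, invRev_append, invRev_invRev]
  have hw : FreeGroup.mk (U ++ invRev V) ≠ 1 := fun h => hUV₀ <| by
    rw [← hUV.isReduced.reduce_eq, ← toWord_mk, h, toWord_one]
  refine ⟨(boundaryAct (FreeGroup.mk P) (cyclePoint _ hUV₀ hUV),
      boundaryAct (FreeGroup.mk P) (cyclePoint _ hVU₀ hVU)),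
    Or.inr ⟨_, _, _, _, Or.inl hw, isPlusLimit_mk_cyclePoint hUV₀ hUV,
      hinv ▸ isPlusLimit_mk_cyclePoint hVU₀ hVU, rfl, rfl⟩, ?_, ?_⟩
  · refine take_toStream_boundaryAct_mk ?_ (by simp) hX
    rw [take_toStream_cyclePoint _ _ (by simp [U])]
    simp [U]
  · refine take_toStream_boundaryAct_mk ?_ (by simp) hY
    rw [take_toStream_cyclePoint _ _ (by simp [V])]
    simp [V]

lemma exists_mem_RW_take_eq (hd : 2 ≤ d) (x y : Boundary d) (k : ℕ) :
    ∃ p ∈ RW {w : FreeGroup (Fin d) | w ≠ 1},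
      p.1.toStream.take k = x.toStream.take k ∧ p.2.toStream.take k = y.toStream.take k := by
  by_cases hxy : x.toStream.take k = y.toStream.take k
  · exact ⟨(x, x), Or.inl rfl, rfl, hxy⟩
  obtain ⟨P, a, b, X, Y, hab, hX, hY⟩ := List.exists_eq_append_cons_of_ne (by simp) hxy
  obtain ⟨p, hp, h₁, h₂⟩ := exists_mem_RW_take_eq_of_append_cons hd hab
    (by rw [← hX]; exact isReducedSeq_iff_forall_isReduced_take.1 x.2 k)
    (by rw [← hY]; exact isReducedSeq_iff_forall_isReduced_take.1 y.2 k)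
  rw [← hX, Stream'.length_take] at h₁
  rw [← hY, Stream'.length_take] at h₂
  exact ⟨p, hp, h₁, h₂⟩

lemma Boundary.hasBasis_nhds_take (x : Boundary d) :
    (𝓝 x).HasBasis (fun _ => True)
      fun k => {z : Boundary d | z.toStream.take k = x.toStream.take k} := by
  convert (PiNat.hasBasis_nhds_cylinder x.1).comap (Subtype.val : Boundary d → _) using 1
  · exact Topology.IsInducing.subtypeVal.nhds_eq_comap x
  ext k z
  simp only [Set.mem_ofPred_eq, Set.mem_preimage, PiNat.mem_cylinder_iff]
  exact Stream'.take_eq_take_iff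

end Density

/-- The set
`R = Δ ∪ {(g·w^{+∞}, g·w^{-∞}) : g ∈ F_d, w ∈ F_d \ {e}}` is dense in the
product space `∂F_d × ∂F_d`. -/
theorem RW_univ_dense (d : ℕ) (hd : 2 ≤ d) :
    Dense (RW {w : FreeGroup (Fin d) | w ≠ 1}) := by
  rintro ⟨x, y⟩
  have hanti (x : Boundary d) : AntitoneOn
      (fun k => {z : Boundary d | z.toStream.take k = x.toStream.take k}) {_k | True} :=
    fun _ _ _ _ hmn _ hz => Stream'.take_eq_take_of_le hz hmn
  have hbasis := (Boundary.hasBasis_nhds_take x).prod_same_index_anti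
    (Boundary.hasBasis_nhds_take y) (hanti x) (hanti y)
  rw [← nhds_prod_eq] at hbasis
  rw [mem_closure_iff_nhds_basis hbasis]
  exact fun k _ => exists_mem_RW_take_eq hd x y k
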